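/- arXiv:1505.02164 — 3 statements merged into one kernel-verified Lean document; each statement's English description precedes it below -/
import Mathlib

section
/- Let (X, d) be a metric space, ν a Borel measure on X, x₀ ∈ X, and c ≥ 0 a real number. If ∫_X e^{−c·d(x₀,x)} dν(x) < ∞, then liminf_{R → ∞} (1/R) · log(ν(B(x₀, R))) ≤ c. (Consequently the volume entropy inf{c ≥ 0 : ∫_X e^{−c·d(x₀,x)} dν(x) < ∞} is bounded below by this liminf.) -/
open MeasureTheory Metric Filter Real
open scoped ENNReal

/-- If `∫_X e^{-c·d(x₀,x)} dν < ∞` for some `c ≥ 0`, then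
`liminf_{R → ∞} (1/R) · log ν(B(x₀, R)) ≤ c`. -/
theorem liminf_log_measure_ball_le_of_lintegral_exp_lt_top
    {X : Type*} [MetricSpace X] [MeasurableSpace X] [BorelSpace X]
    (ν : MeasureTheory.Measure X) (x₀ : X) (c : ℝ) (hc : 0 ≤ c)
    (hint : ∫⁻ x, ENNReal.ofReal (Real.exp (-c * dist x₀ x)) ∂ν < ⊤) :
    Filter.liminf
      (fun R : ℝ => ((1 / R : ℝ) : EReal) * ENNReal.log (ν (Metric.ball x₀ R)))
      Filter.atTop ≤ (c : EReal) := by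
  set I := ∫⁻ x, ENNReal.ofReal (Real.exp (-c * dist x₀ x)) ∂ν with hI
  have key : ∀ R : ℝ, 0 < R → ν (ball x₀ R) ≤ ENNReal.ofReal (Real.exp (c * R)) * I := by
    intro R hR
    calc ν (ball x₀ R) = ∫⁻ _ in ball x₀ R, 1 ∂ν := (setLIntegral_one _).symm
      _ ≤ ∫⁻ x in ball x₀ R,
            ENNReal.ofReal (Real.exp (c * R)) * ENNReal.ofReal (Real.exp (-c * dist x₀ x)) ∂ν := by
          apply setLIntegral_mono' measurableSet_ball
          intro x hx
          rw [← ENNReal.ofReal_mul (Real.exp_nonneg _), ← Real.exp_add]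
          rw [show (1 : ℝ≥0∞) = ENNReal.ofReal 1 by simp]
          apply ENNReal.ofReal_le_ofReal
          apply Real.one_le_exp
          have := mem_ball'.mp hx
          nlinarith
      _ = ENNReal.ofReal (Real.exp (c * R)) *
            ∫⁻ x in ball x₀ R, ENNReal.ofReal (Real.exp (-c * dist x₀ x)) ∂ν :=
          lintegral_const_mul' _ _ ENNReal.ofReal_ne_top
      _ ≤ ENNReal.ofReal (Real.exp (c * R)) * I := by
          gcongr
          exact setLIntegral_le_lintegral _ _
  by_cases hI0 : I = 0
  · have : ∀ᶠ R : ℝ in atTop,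
        ((1 / R : ℝ) : EReal) * ENNReal.log (ν (Metric.ball x₀ R)) = (⊥ : EReal) := by
      filter_upwards [eventually_gt_atTop 0] with R hR
      have h0 : ν (ball x₀ R) = 0 := by
        have := key R hR; simpa [hI0] using this
      rw [h0, ENNReal.log_zero]
      exact EReal.coe_mul_bot_of_pos (by positivity)
    calc liminf _ atTop ≤ liminf (fun _ : ℝ => (⊥ : EReal)) atTop :=
          liminf_le_liminf (this.mono fun R hR => hR.le)
      _ = ⊥ := liminf_const _
      _ ≤ (c : EReal) := bot_le
  · set l : ℝ := (I.toReal).log with hl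
    have hlog : ENNReal.log I = (l : EReal) := by
      rw [hl, ENNReal.log_pos_real hI0 hint.ne]
    have bound : ∀ᶠ R : ℝ in atTop,
        ((1 / R : ℝ) : EReal) * ENNReal.log (ν (Metric.ball x₀ R)) ≤
          (((c + (1 / R) * l : ℝ)) : EReal) := by
      filter_upwards [eventually_gt_atTop 0] with R hR
      have h1 : ENNReal.log (ν (ball x₀ R)) ≤ ((c * R + l : ℝ) : EReal) := by
        calc ENNReal.log (ν (ball x₀ R))
            ≤ ENNReal.log (ENNReal.ofReal (Real.exp (c * R)) * I) :=
              ENNReal.log_monotone (key R hR)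
          _ = ENNReal.log (ENNReal.ofReal (Real.exp (c * R))) + ENNReal.log I :=
              ENNReal.log_mul_add
          _ = ((c * R : ℝ) : EReal) + (l : EReal) := by
              rw [hlog, ENNReal.log_ofReal_of_pos (Real.exp_pos _), Real.log_exp]
          _ = ((c * R + l : ℝ) : EReal) := by rw [← EReal.coe_add]
      calc ((1 / R : ℝ) : EReal) * ENNReal.log (ν (ball x₀ R))
          ≤ ((1 / R : ℝ) : EReal) * ((c * R + l : ℝ) : EReal) := by
            apply mul_le_mul_of_nonneg_left h1
            exact_mod_cast (by positivity : (0:ℝ) ≤ 1 / R)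
        _ = (((1 / R) * (c * R + l) : ℝ) : EReal) := by rw [← EReal.coe_mul]
        _ = (((c + (1 / R) * l : ℝ)) : EReal) := by
            norm_cast
            field_simp
    have htend : Tendsto (fun R : ℝ => (((c + (1 / R) * l : ℝ)) : EReal)) atTop
        (nhds (c : EReal)) := by
      have : Tendsto (fun R : ℝ => c + (1 / R) * l) atTop (nhds c) := by
        have h2 := (tendsto_const_nhds : Tendsto (fun _ : ℝ => c) atTop (nhds c)).add
          (tendsto_inv_atTop_zero.mul_const l)
        simpa [one_div] using h2
      exact (continuous_coe_real_ereal.tendsto c).comp this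
    calc liminf _ atTop
        ≤ liminf (fun R : ℝ => (((c + (1 / R) * l : ℝ)) : EReal)) atTop :=
          liminf_le_liminf bound
      _ = (c : EReal) := htend.liminf_eq
end

section
/- Let (X, d) be a metric space, ν a Borel measure on X, w ∈ X, K > 0 a real number, and f : X → ℝ a measurable function such that f(x) ≤ K·d(w, x) for every x ∈ X. Then inf{c ≥ 0 : ∫_X e^{−c·d(w,x)} dν(x) < ∞} ≤ K · inf{c ≥ 0 : ∫_X e^{−c·f(x)} dν(x) < ∞}, with the convention that the infimum of the empty set is +∞. -/
/-- If a measurable function `f` satisfies `f x ≤ K · d(w, x)` for all `x`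
(with `K > 0`), then the volume entropy
`inf {c ≥ 0 : ∫_X e^{-c·d(w,x)} dν < ∞}` is at most `K` times
`inf {c ≥ 0 : ∫_X e^{-c·f(x)} dν < ∞}` (infima in the extended reals with
`inf ∅ = +∞`). -/
theorem volume_entropy_le_mul_entropy_of_potential_le
    {X : Type*} [MetricSpace X] [MeasurableSpace X] [BorelSpace X]
    (ν : MeasureTheory.Measure X) (w : X) (K : ℝ) (hK : 0 < K)
    (f : X → ℝ) (hf : Measurable f) (hfd : ∀ x, f x ≤ K * dist w x) :
    sInf ((fun c : ℝ => (c : EReal)) ''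
        {c : ℝ | 0 ≤ c ∧ ∫⁻ x, ENNReal.ofReal (Real.exp (-c * dist w x)) ∂ν < ⊤}) ≤
      (K : EReal) * sInf ((fun c : ℝ => (c : EReal)) ''
        {c : ℝ | 0 ≤ c ∧ ∫⁻ x, ENNReal.ofReal (Real.exp (-c * f x)) ∂ν < ⊤}) := by
  rw [← EReal.div_le_iff_le_mul (by exact_mod_cast hK) (by simp)]
  apply le_sInf
  rintro b ⟨c, ⟨hc0, hcint⟩, rfl⟩
  rw [EReal.div_le_iff_le_mul (by exact_mod_cast hK) (by simp)]
  rw [← EReal.coe_mul]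
  apply sInf_le
  refine ⟨K * c, ⟨mul_nonneg hK.le hc0, ?_⟩, rfl⟩
  refine lt_of_le_of_lt (MeasureTheory.lintegral_mono fun x => ?_) hcint
  apply ENNReal.ofReal_le_ofReal
  apply Real.exp_le_exp.2
  have := mul_le_mul_of_nonneg_left (hfd x) hc0
  nlinarith [hfd x]
end

section
/- Let (X, d) be a metric space, ν a Borel measure on X, and x₀ ∈ X. Suppose there exist constants C > 0, a > 0 and R₀ > 0 such that ν(B(x₀, R)) ≥ C·e^{a·R} for every R ≥ R₀. Then for every real c with 0 ≤ c < a one has ∫_X e^{−c·d(x₀,x)} dν(x) = ∞. -/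
/-- If `ν(B(x₀, R)) ≥ C·e^{a·R}` for all `R ≥ R₀` (with `C, a, R₀ > 0`), then
for every `0 ≤ c < a` the integral `∫_X e^{-c·d(x₀,x)} dν` is infinite. -/
theorem lintegral_exp_eq_top_of_measure_ball_ge
    {X : Type*} [MetricSpace X] [MeasurableSpace X] [BorelSpace X]
    (ν : MeasureTheory.Measure X) (x₀ : X) (C a R₀ : ℝ)
    (hC : 0 < C) (ha : 0 < a) (hR₀ : 0 < R₀)
    (hball : ∀ R : ℝ, R₀ ≤ R →
      ENNReal.ofReal (C * Real.exp (a * R)) ≤ ν (Metric.ball x₀ R))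
    (c : ℝ) (hc0 : 0 ≤ c) (hca : c < a) :
    ∫⁻ x, ENNReal.ofReal (Real.exp (-c * dist x₀ x)) ∂ν = ⊤ := by
  have hac : 0 < a - c := by linarith
  have key : ∀ R : ℝ, R₀ ≤ R →
      ENNReal.ofReal (C * Real.exp ((a - c) * R)) ≤
        ∫⁻ x, ENNReal.ofReal (Real.exp (-c * dist x₀ x)) ∂ν := by
    intro R hR
    have hmul : Real.exp (-c * R) * (C * Real.exp (a * R))
        = C * Real.exp ((a - c) * R) := by
      rw [mul_left_comm, ← Real.exp_add]; ring_nf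
    calc ENNReal.ofReal (C * Real.exp ((a - c) * R))
        = ENNReal.ofReal (Real.exp (-c * R)) * ENNReal.ofReal (C * Real.exp (a * R)) := by
          rw [← ENNReal.ofReal_mul (Real.exp_nonneg _), hmul]
      _ ≤ ENNReal.ofReal (Real.exp (-c * R)) * ν (Metric.ball x₀ R) :=
          mul_le_mul_right (hball R hR) _
      _ = ∫⁻ _ in Metric.ball x₀ R, ENNReal.ofReal (Real.exp (-c * R)) ∂ν := by
          rw [MeasureTheory.setLIntegral_const, mul_comm]
      _ ≤ ∫⁻ x in Metric.ball x₀ R, ENNReal.ofReal (Real.exp (-c * dist x₀ x)) ∂ν := by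
          refine MeasureTheory.setLIntegral_mono' measurableSet_ball fun x hx => ?_
          have hd : dist x₀ x < R := by rw [dist_comm]; exact Metric.mem_ball.1 hx
          exact ENNReal.ofReal_le_ofReal (Real.exp_le_exp.2 (by nlinarith))
      _ ≤ ∫⁻ x, ENNReal.ofReal (Real.exp (-c * dist x₀ x)) ∂ν :=
          MeasureTheory.setLIntegral_le_lintegral _ _
  refine ENNReal.eq_top_of_forall_nnreal_le fun r => ?_
  set R : ℝ := max R₀ (r / (C * (a - c))) with hRdef
  have hR1 : R₀ ≤ R := le_max_left _ _
  have hR2 : (r : ℝ) / (C * (a - c)) ≤ R := le_max_right _ _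
  have hcac : 0 < C * (a - c) := mul_pos hC hac
  have hr : (r : ℝ) ≤ C * Real.exp ((a - c) * R) := by
    have h1 : (r : ℝ) ≤ C * (a - c) * R := by
      rw [div_le_iff₀ hcac] at hR2; linarith
    have h2 : (a - c) * R ≤ Real.exp ((a - c) * R) :=
      (Real.add_one_le_exp _).trans' (by linarith)
    nlinarith
  calc (r : ENNReal) = ENNReal.ofReal r := ENNReal.ofReal_coe_nnreal.symm
    _ ≤ ENNReal.ofReal (C * Real.exp ((a - c) * R)) := ENNReal.ofReal_le_ofReal hr
    _ ≤ _ := key R hR1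
end
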